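/- For each n, k ∈ ℕ with n > k, there is a DNNF circuit of size n^{O(k)} over the variables {x_{i,j} : i, j ∈ [n], i ≠ j} expressing the function lintop_{n,k}. -/

import Mathlib

/-- Labels of nodes in an NNF circuit: Boolean constants, literals (a variable
with a polarity), conjunction, and disjunction. -/
inductive CLabel (V : Type*) where
  | const (b : Bool)
  | lit (v : V) (b : Bool)
  | and
  | or
deriving DecidableEq

/-- A Boolean circuit in negation normal form, given as a DAG: nodes are
`Fin size`, each node has a label and a list of children, and every edge goes
to a node with a strictly smaller index (this guarantees acyclicity).  The
node `root` is the (distinguished) root of the circuit. -/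
structure Circuit (V : Type*) where
  size : ℕ
  label : Fin size → CLabel V
  children : Fin size → List (Fin size)
  hwf : ∀ i : Fin size, ∀ j ∈ children i, (j : ℕ) < (i : ℕ)
  root : Fin size

namespace Circuit

variable {V : Type*}

/-- The truth value computed at node `i` of the circuit under assignment `α`. -/
def eval (C : Circuit V) (α : V → Bool) (i : Fin C.size) : Bool :=
  match C.label i with
  | .const b => b
  | .lit v b => α v == b
  | .and => (C.children i).attach.all (fun j => C.eval α j.1)
  | .or => (C.children i).attach.any (fun j => C.eval α j.1)
termination_by (i : ℕ)
decreasing_by all_goals exact C.hwf i j.1 j.2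

variable [DecidableEq V]

/-- The set of variables occurring in the subcircuit rooted at node `i`. -/
def vars (C : Circuit V) (i : Fin C.size) : Finset V :=
  match C.label i with
  | .const _ => ∅
  | .lit v _ => {v}
  | .and => ((C.children i).attach.map (fun j => C.vars j.1)).foldr (· ∪ ·) ∅
  | .or => ((C.children i).attach.map (fun j => C.vars j.1)).foldr (· ∪ ·) ∅
termination_by (i : ℕ)
decreasing_by all_goals exact C.hwf i j.1 j.2

/-- A circuit is decomposable (a DNNF circuit) if for every ∧-node the
variable sets of (the subcircuits rooted at) its children are pairwise
disjoint. -/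
def Decomposable (C : Circuit V) : Prop :=
  ∀ i : Fin C.size, C.label i = .and →
    (C.children i).Pairwise (fun j k => Disjoint (C.vars j) (C.vars k))

end Circuit

/-- The variables `x_{i,j}` for `i, j ∈ [n]`, `i ≠ j`, of the function
`lintop_{n,k}`. -/
abbrev VarsT (n : ℕ) := {p : Fin n × Fin n // p.1 ≠ p.2}

/-- An assignment `α` is a model of `lintop_{n,k}` iff there are a set
`K ⊆ [n]` with `|K| = k` and a linear order `r` on `K` such that
`α x_{i,j} = true` exactly when (`i, j ∈ K` and `i ≺ j`) or (`i ∈ K` and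
`j ∉ K`). -/
def satLintop (n k : ℕ) (α : VarsT n → Bool) : Prop :=
  ∃ K : Finset (Fin n), K.card = k ∧
    ∃ r : Fin n → Fin n → Bool,
      (∀ a ∈ K, r a a = false) ∧
      (∀ a ∈ K, ∀ b ∈ K, ∀ c ∈ K, r a b = true → r b c = true → r a c = true) ∧
      (∀ a ∈ K, ∀ b ∈ K, a ≠ b → r a b = true ∨ r b a = true) ∧
      (∀ p : VarsT n, α p = true ↔
        ((p.1.1 ∈ K ∧ p.1.2 ∈ K ∧ r p.1.1 p.1.2 = true) ∨ (p.1.1 ∈ K ∧ p.1.2 ∉ K)))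

/-!
A model of `lintop_{n,k}` is determined by listing `K` in `≺`-order, i.e. by an injection
`Fin k ↪ Fin n`, so there are at most `n^k` models. The DNF with one full term per model computes
the function, and it is decomposable because each term is a conjunction of literals on pairwise
distinct variables; it has at most `n^k (n^2 + 1) + 1` nodes.
-/

namespace Circuit

section Unfolding

variable {V : Type*} (C : Circuit V) (α : V → Bool) {i : Fin C.size}

theorem eval_of_label_eq_lit {v : V} {b : Bool} (h : C.label i = .lit v b) :
    C.eval α i = (α v == b) := by
  rw [eval, h]

theorem eval_eq_true_iff_of_label_eq_and (h : C.label i = .and) :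
    C.eval α i = true ↔ ∀ j ∈ C.children i, C.eval α j = true := by
  rw [eval, h]
  simp

theorem eval_eq_true_iff_of_label_eq_or (h : C.label i = .or) :
    C.eval α i = true ↔ ∃ j ∈ C.children i, C.eval α j = true := by
  rw [eval, h]
  simp

theorem vars_of_label_eq_lit [DecidableEq V] {v : V} {b : Bool} (h : C.label i = .lit v b) :
    C.vars i = {v} := by
  rw [vars, h]

end Unfolding

noncomputable section DNF

variable {ι V : Type*} [Fintype ι] [Fintype V]

variable (ι V) in
/-- The nodes of `dnf β`: literal nodes `(t, v)` come first, then one ∧-node per term `t`, then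
the ∨-root. -/
abbrev dnfSize : ℕ := Fintype.card (ι × V) + Fintype.card ι + 1

def dnfLitNode (t : ι) (v : V) : Fin (dnfSize ι V) :=
  (Fin.castAdd _ (Fintype.equivFin (ι × V) (t, v))).castSucc

def dnfAndNode (t : ι) : Fin (dnfSize ι V) :=
  (Fin.natAdd _ (Fintype.equivFin ι t)).castSucc

theorem dnfNode_cases (i : Fin (dnfSize ι V)) :
    i = Fin.last _ ∨ (∃ t, i = dnfAndNode t) ∨ ∃ t v, i = dnfLitNode t v := by
  induction i using Fin.lastCases with
  | last => exact .inl rfl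
  | cast i =>
    induction i using Fin.addCases with
    | left l =>
      obtain ⟨⟨t, v⟩, rfl⟩ := (Fintype.equivFin (ι × V)).surjective l
      exact .inr (.inr ⟨t, v, rfl⟩)
    | right a =>
      obtain ⟨t, rfl⟩ := (Fintype.equivFin ι).surjective a
      exact .inr (.inl ⟨t, rfl⟩)

variable (β : ι → V → Bool)

def dnfLabel : Fin (dnfSize ι V) → CLabel V :=
  Fin.lastCases .or <| Fin.addCases
    (fun l => let p := (Fintype.equivFin (ι × V)).symm l; .lit p.2 (β p.1 p.2))
    (fun _ => .and)

def dnfChildren : Fin (dnfSize ι V) → List (Fin (dnfSize ι V)) :=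
  Fin.lastCases ((Finset.univ : Finset ι).toList.map dnfAndNode) <| Fin.addCases
    (fun _ => [])
    (fun a => (Finset.univ : Finset V).toList.map (dnfLitNode ((Fintype.equivFin ι).symm a)))

theorem dnfLabel_last : dnfLabel β (Fin.last _) = .or := Fin.lastCases_last

theorem dnfLabel_dnfAndNode (t : ι) : dnfLabel β (dnfAndNode t) = .and := by
  simp only [dnfLabel, dnfAndNode, Fin.lastCases_castSucc, Fin.addCases_right]

theorem dnfLabel_dnfLitNode (t : ι) (v : V) : dnfLabel β (dnfLitNode t v) = .lit v (β t v) := by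
  simp only [dnfLabel, dnfLitNode, Fin.lastCases_castSucc, Fin.addCases_left,
    Equiv.symm_apply_apply]

theorem dnfChildren_last :
    dnfChildren (Fin.last _) = (Finset.univ : Finset ι).toList.map (dnfAndNode (V := V)) :=
  Fin.lastCases_last

theorem dnfChildren_dnfAndNode (t : ι) :
    dnfChildren (dnfAndNode t) = (Finset.univ : Finset V).toList.map (dnfLitNode t) := by
  simp only [dnfChildren, dnfAndNode, Fin.lastCases_castSucc, Fin.addCases_right,
    Equiv.symm_apply_apply]

theorem dnfChildren_dnfLitNode (t : ι) (v : V) : dnfChildren (dnfLitNode t v) = [] := by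
  simp only [dnfChildren, dnfLitNode, Fin.lastCases_castSucc, Fin.addCases_left]

theorem dnfChildren_lt (i : Fin (dnfSize ι V)) : ∀ j ∈ dnfChildren i, (j : ℕ) < i := by
  rcases dnfNode_cases i with rfl | ⟨t, rfl⟩ | ⟨t, v, rfl⟩
  · simp [dnfChildren_last, dnfAndNode]
  · rw [dnfChildren_dnfAndNode]
    simp only [List.mem_map, forall_exists_index, and_imp]
    rintro _ v - rfl
    simp only [dnfAndNode, dnfLitNode, Fin.val_castSucc, Fin.val_castAdd, Fin.val_natAdd]
    omega
  · simp [dnfChildren_dnfLitNode]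

/-- The disjunction, over `t : ι`, of the full conjunctions `⋀ v, (v = β t v)`. -/
abbrev dnf : Circuit V where
  size := dnfSize ι V
  label := dnfLabel β
  children := dnfChildren
  hwf := dnfChildren_lt
  root := Fin.last _

theorem eval_dnf_dnfAndNode (α : V → Bool) (t : ι) :
    (dnf β).eval α (dnfAndNode t) = true ↔ α = β t := by
  rw [eval_eq_true_iff_of_label_eq_and _ _ (dnfLabel_dnfAndNode β t),
    show (dnf β).children (dnfAndNode t) = _ from dnfChildren_dnfAndNode t]
  simp [eval_of_label_eq_lit (dnf β) _ (dnfLabel_dnfLitNode β t _), funext_iff]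

theorem eval_dnf_root (α : V → Bool) : (dnf β).eval α (dnf β).root = true ↔ ∃ t, β t = α := by
  rw [eval_eq_true_iff_of_label_eq_or _ _ (dnfLabel_last β),
    show (dnf β).children (dnf β).root = _ from dnfChildren_last]
  simp [eval_dnf_dnfAndNode, eq_comm (a := α)]

theorem decomposable_dnf [DecidableEq V] : (dnf β).Decomposable := by
  intro i hi
  rcases dnfNode_cases i with rfl | ⟨t, rfl⟩ | ⟨t, v, rfl⟩
  · simp [dnfLabel_last] at hi
  · rw [show (dnf β).children (dnfAndNode t) = _ from dnfChildren_dnfAndNode t,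
      List.pairwise_map]
    refine (Finset.nodup_toList _).imp fun hvw => ?_
    rw [vars_of_label_eq_lit (dnf β) (dnfLabel_dnfLitNode β t _),
      vars_of_label_eq_lit (dnf β) (dnfLabel_dnfLitNode β t _)]
    exact Finset.disjoint_singleton.mpr hvw
  · simp [dnfLabel_dnfLitNode] at hi

theorem size_dnf : (dnf β).size = Fintype.card ι * Fintype.card V + Fintype.card ι + 1 := by
  simp

end DNF

end Circuit

theorem Finset.exists_fin_embedding_of_strictTotalOn {α : Type*} (K : Finset α) {k : ℕ}
    (hK : K.card = k) (r : α → α → Prop) (hirr : ∀ a ∈ K, ¬ r a a)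
    (htrans : ∀ a ∈ K, ∀ b ∈ K, ∀ c ∈ K, r a b → r b c → r a c)
    (htot : ∀ a ∈ K, ∀ b ∈ K, a ≠ b → r a b ∨ r b a) :
    ∃ f : Fin k ↪ α, Set.range f = K ∧ ∀ i j, r (f i) (f j) ↔ i < j := by
  classical
  let R : K → K → Prop := fun a b => r a b
  have : IsStrictTotalOrder K R :=
    { irrefl := fun a => hirr a a.2
      trans := fun a b c => htrans a a.2 b b.2 c c.2
      trichotomous := fun a b hab hba => by
        by_contra hne
        rcases htot a a.2 b b.2 (fun h => hne (Subtype.ext h)) with h | h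
        exacts [hab h, hba h] }
  let _ : LinearOrder K := linearOrderOfSTO R
  let e : Fin k ≃o K := monoEquivOfFin K (by rw [Fintype.card_coe, hK])
  refine ⟨e.toEquiv.toEmbedding.trans (Function.Embedding.subtype _), ?_, fun i j => ?_⟩
  · ext a
    simp only [Set.mem_range, Function.Embedding.trans_apply, Equiv.coe_toEmbedding,
      Function.Embedding.coe_subtype, Finset.mem_coe]
    exact ⟨by rintro ⟨i, rfl⟩; exact (e i).2, fun ha => ⟨e.symm ⟨a, ha⟩, by simp⟩⟩
  · exact e.lt_iff_lt

/-- The model of `lintop_{n,k}` with `K` the range of `f`, ordered by `f i ≺ f j ↔ i < j`. -/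
def lintopModel {n k : ℕ} (f : Fin k ↪ Fin n) (p : VarsT n) : Bool :=
  decide ((∃ i j, i < j ∧ f i = p.1.1 ∧ f j = p.1.2) ∨
    ((∃ i, f i = p.1.1) ∧ ¬ ∃ j, f j = p.1.2))

theorem satLintop_lintopModel {n k : ℕ} (f : Fin k ↪ Fin n) :
    satLintop n k (lintopModel f) := by
  refine ⟨Finset.univ.map f, by simp, fun a b => decide (∃ i j, i < j ∧ f i = a ∧ f j = b),
    ?_, ?_, ?_, fun p => ?_⟩
  · rintro _ -
    simp only [decide_eq_false_iff_not, not_exists, not_and]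
    rintro i j hij rfl hji
    exact hij.ne (f.injective hji.symm)
  · simp only [decide_eq_true_eq]
    rintro - - - - - - ⟨i, j, hij, rfl, rfl⟩ ⟨j', l, hjl, hj, rfl⟩
    exact ⟨i, l, hij.trans_le ((f.injective hj).ge) |>.trans hjl, rfl, rfl⟩
  · simp only [Finset.mem_map, Finset.mem_univ, true_and, decide_eq_true_eq]
    rintro _ ⟨i, rfl⟩ _ ⟨j, rfl⟩ hij
    rcases lt_or_gt_of_ne (ne_of_apply_ne f hij) with h | h
    exacts [.inl ⟨i, j, h, rfl, rfl⟩, .inr ⟨j, i, h, rfl, rfl⟩]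
  · simp only [lintopModel, Finset.mem_map, Finset.mem_univ, true_and, decide_eq_true_eq]
    constructor
    · rintro (⟨i, j, hij, hi, hj⟩ | h)
      exacts [.inl ⟨⟨i, hi⟩, ⟨j, hj⟩, i, j, hij, hi, hj⟩, .inr h]
    · rintro (⟨-, -, h⟩ | h)
      exacts [.inl h, .inr h]

theorem exists_lintopModel_eq_of_satLintop {n k : ℕ} {α : VarsT n → Bool}
    (h : satLintop n k α) : ∃ f : Fin k ↪ Fin n, lintopModel f = α := by
  obtain ⟨K, hK, r, hirr, htrans, htot, hα⟩ := h
  obtain ⟨f, hrange, hlt⟩ := K.exists_fin_embedding_of_strictTotalOn hK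
    (fun a b => r a b = true) (fun a ha => by simp [hirr a ha]) htrans htot
  have hmem : ∀ a, a ∈ K ↔ ∃ i, f i = a := fun a => by
    rw [← Finset.mem_coe, ← hrange, Set.mem_range]
  refine ⟨f, funext fun ⟨⟨a, b⟩, _⟩ => ?_⟩
  rw [Bool.eq_iff_iff, hα, lintopModel, decide_eq_true_eq, hmem, hmem]
  constructor
  · rintro (⟨i, j, hij, rfl, rfl⟩ | h)
    exacts [.inl ⟨⟨i, rfl⟩, ⟨j, rfl⟩, (hlt i j).mpr hij⟩, .inr h]
  · rintro (⟨⟨i, rfl⟩, ⟨j, rfl⟩, hr⟩ | h)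
    exacts [.inl ⟨i, j, (hlt i j).mp hr, rfl, rfl⟩, .inr h]

theorem satLintop_iff_exists_lintopModel_eq {n k : ℕ} (α : VarsT n → Bool) :
    satLintop n k α ↔ ∃ f : Fin k ↪ Fin n, lintopModel f = α :=
  ⟨exists_lintopModel_eq_of_satLintop, fun ⟨f, hf⟩ => hf ▸ satLintop_lintopModel f⟩

theorem card_varsT_le (n : ℕ) : Fintype.card (VarsT n) ≤ n ^ 2 :=
  (Fintype.card_subtype_le _).trans_eq (by simp [sq])

/-- there is a constant `c` such that for all `n > k` there is a
DNNF circuit with at most `c · n^{c·(k+1)}` nodes (i.e. of size `n^{O(k)}`)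
over the variables `x_{i,j}` (`i ≠ j`) computing `lintop_{n,k}`. -/
theorem dnnf_for_lintop_polynomial_size :
    ∃ c : ℕ, 0 < c ∧ ∀ n k : ℕ, k < n → ∃ C : Circuit (VarsT n),
      C.Decomposable ∧
      (∀ α : VarsT n → Bool, C.eval α C.root = true ↔ satLintop n k α) ∧
      C.size ≤ c * n ^ (c * (k + 1)) := by
  refine ⟨3, by norm_num, fun n k hk => ⟨Circuit.dnf (lintopModel (n := n) (k := k)),
    Circuit.decomposable_dnf _,
    fun α => (Circuit.eval_dnf_root _ α).trans (satLintop_iff_exists_lintopModel_eq α).symm, ?_⟩⟩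
  have hn : 1 ≤ n := by omega
  have hmodels : Fintype.card (Fin k ↪ Fin n) ≤ n ^ k := by
    simpa only [Fintype.card_embedding_eq, Fintype.card_fin] using n.descFactorial_le_pow k
  have hpow : n ^ k ≤ n ^ (k + 2) := Nat.pow_le_pow_right hn (by omega)
  have hone : 1 ≤ n ^ (k + 2) := Nat.one_le_pow _ _ hn
  calc (Circuit.dnf lintopModel).size
      _ = Fintype.card (Fin k ↪ Fin n) * Fintype.card (VarsT n)
          + Fintype.card (Fin k ↪ Fin n) + 1 := Circuit.size_dnf _
      _ ≤ n ^ k * n ^ 2 + n ^ k + 1 := by gcongr; exact card_varsT_le n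
      _ ≤ 3 * n ^ (k + 2) := by rw [← pow_add]; omega
      _ ≤ 3 * n ^ (3 * (k + 1)) := by gcongr; omega
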